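/- arXiv:2306.09757 — 2 statements merged into one kernel-verified Lean document; each statement's English description precedes it below -/
import Mathlib

section
/- Let f_1, …, f_N : ℝⁿ → ℝⁿ be continuous vector fields. Assume there exist a continuously differentiable function V : ℝⁿ → ℝ, a compact set B ⊆ ℝⁿ, and constants γ ∈ ℝ, ρ > 0 such that V(x) = γ for all x on the topological boundary of B, V(x) > γ for all x ∈ ℝⁿ \ B, and ∇V(x) · f_i(x) ≤ -ρ for all x ∈ ℝⁿ \ B and all i = 1, …, N. Then B is positively invariant for the switched system: every solution x with x(0) ∈ B satisfies x(t) ∈ B for all t ≥ 0. -/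
/-- A solution of the switched system determined by the vector fields `f i` on `ℝⁿ`:
a function differentiable on `[0,∞)` such that at every time `t ≥ 0` its derivative
(within `[0,∞)`) is given by one of the vector fields (arbitrary switching). -/
def IsSwitchedSolution {n N : ℕ}
    (f : Fin N → EuclideanSpace ℝ (Fin n) → EuclideanSpace ℝ (Fin n))
    (x : ℝ → EuclideanSpace ℝ (Fin n)) : Prop :=
  ∀ t : ℝ, 0 ≤ t → ∃ i : Fin N, HasDerivWithinAt x (f i (x t)) (Set.Ici 0) t

/-!
If a solution started in `B` were outside `B` at time `t`, consider the last time `s < t` at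
which it lies in `B`. Then `x s` is on the frontier of `B`, so `V (x s) = γ`, while on `(s, t]`
the solution stays outside `B`, where `V` strictly decreases along every vector field.
Hence `V (x t) < γ`, contradicting `V > γ` outside `B`.
The last time exists because `B` is closed: a frontier point outside `B` would have `V = γ < V`.
-/

open Set Filter Topology

theorem exists_mem_frontier_forall_notMem_of_continuousOn {X : Type*} [TopologicalSpace X]
    {c : ℝ → X} {B : Set X} {a b : ℝ} (hB : IsClosed B) (hc : ContinuousOn c (Icc a b))
    (hab : a ≤ b) (ha : c a ∈ B) (hb : c b ∉ B) :
    ∃ s ∈ Ico a b, c s ∈ frontier B ∧ ∀ u ∈ Ioc s b, c u ∉ B := by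
  by_contra! hexit
  refine hb (IsClosed.mem_of_ge_of_forall_exists_gt (s := c ⁻¹' B) ?_ ha hab ?_)
  · rw [inter_comm]
    exact hc.preimage_isClosed_of_isClosed isClosed_Icc hB
  · rintro s ⟨hsB, hs⟩
    by_contra hempty
    have hout : ∀ u ∈ Ioc s b, c u ∉ B := fun u hu huB => hempty ⟨u, huB, hu⟩
    have hright : Tendsto c (𝓝[>] s) (𝓝 (c s)) :=
      ((hc s (Ico_subset_Icc_self hs)).mono_of_mem_nhdsWithin
        (Icc_mem_nhdsGT_of_mem ⟨hs.1, hs.2⟩)).tendsto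
    have hfr : c s ∈ frontier B := by
      rw [frontier_eq_closure_inter_closure]
      exact ⟨subset_closure hsB, mem_closure_of_tendsto hright
        (eventually_of_mem (Ioc_mem_nhdsGT hs.2) hout)⟩
    obtain ⟨u, hu, huB⟩ := hexit s hs hfr
    exact hout u hu huB

theorem strictAntiOn_comp_of_fderiv_neg {E : Type*} [NormedAddCommGroup E] [NormedSpace ℝ E]
    {V : E → ℝ} {c : ℝ → E} {a b : ℝ} (hV : Differentiable ℝ V) (hc : ContinuousOn c (Icc a b))
    (hderiv : ∀ u ∈ Ioo a b, ∃ v, HasDerivAt c v u ∧ fderiv ℝ V (c u) v < 0) :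
    StrictAntiOn (V ∘ c) (Icc a b) :=
  strictAntiOn_of_deriv_neg (convex_Icc a b) (hV.continuous.comp_continuousOn hc) fun u hu => by
    rw [interior_Icc] at hu
    obtain ⟨v, hv, hneg⟩ := hderiv u hu
    rwa [((hV (c u)).hasFDerivAt.comp_hasDerivAt u hv).deriv]

namespace IsSwitchedSolution

variable {n N : ℕ} {f : Fin N → EuclideanSpace ℝ (Fin n) → EuclideanSpace ℝ (Fin n)}
  {x : ℝ → EuclideanSpace ℝ (Fin n)}

theorem continuousOn (hx : IsSwitchedSolution f x) : ContinuousOn x (Ici 0) := fun t ht =>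
  (hx t ht).elim fun _ hi => hi.continuousWithinAt

theorem exists_hasDerivAt (hx : IsSwitchedSolution f x) {t : ℝ} (ht : 0 < t) :
    ∃ i, HasDerivAt x (f i (x t)) t :=
  (hx t ht.le).imp fun _ hi => hi.hasDerivAt (Ici_mem_nhds ht)

end IsSwitchedSolution

theorem positively_invariant_of_lyapunov_general {n N : ℕ}
    (f : Fin N → EuclideanSpace ℝ (Fin n) → EuclideanSpace ℝ (Fin n))
    (V : EuclideanSpace ℝ (Fin n) → ℝ) (hV : ContDiff ℝ 1 V)
    (B : Set (EuclideanSpace ℝ (Fin n)))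
    (γ ρ : ℝ) (hρ : 0 < ρ)
    (hbd : ∀ x ∈ frontier B, V x = γ)
    (hgt : ∀ x ∉ B, V x > γ)
    (hdec : ∀ x ∉ B, ∀ i : Fin N, fderiv ℝ V x (f i x) ≤ -ρ) :
    ∀ x : ℝ → EuclideanSpace ℝ (Fin n), IsSwitchedSolution f x →
      x 0 ∈ B → ∀ t : ℝ, 0 ≤ t → x t ∈ B := by
  intro x hx hx0 t ht
  by_contra hxt
  have hB : IsClosed B :=
    frontier_subset_iff_isClosed.1 fun y hy => by_contra fun hyB => (hgt y hyB).ne' (hbd y hy)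
  obtain ⟨s, ⟨hs0, hst⟩, hfr, hout⟩ := exists_mem_frontier_forall_notMem_of_continuousOn hB
    (hx.continuousOn.mono Icc_subset_Ici_self) ht hx0 hxt
  have hanti : StrictAntiOn (V ∘ x) (Icc s t) := by
    refine strictAntiOn_comp_of_fderiv_neg (hV.differentiable one_ne_zero)
      (hx.continuousOn.mono fun u hu => hs0.trans hu.1) fun u hu => ?_
    obtain ⟨i, hi⟩ := hx.exists_hasDerivAt (hs0.trans_lt hu.1)
    exact ⟨_, hi, (hdec _ (hout u ⟨hu.1, hu.2.le⟩) i).trans_lt (neg_lt_zero.2 hρ)⟩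
  have hdrop : V (x t) < V (x s) := hanti ⟨le_rfl, hst.le⟩ ⟨hst.le, le_rfl⟩ hst
  linarith [hbd _ hfr, hgt _ hxt]

/-- Under the Lyapunov-type conditions (`V = γ` on `∂B`, `V > γ` outside `B`, and
`∇V · f_i ≤ -ρ` outside `B`), the compact set `B` is positively invariant for the
switched system. -/
theorem positively_invariant_of_lyapunov {n N : ℕ}
    (f : Fin N → EuclideanSpace ℝ (Fin n) → EuclideanSpace ℝ (Fin n))
    (hf : ∀ i, Continuous (f i))
    (V : EuclideanSpace ℝ (Fin n) → ℝ) (hV : ContDiff ℝ 1 V)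
    (B : Set (EuclideanSpace ℝ (Fin n))) (hB : IsCompact B)
    (γ ρ : ℝ) (hρ : 0 < ρ)
    (hbd : ∀ x ∈ frontier B, V x = γ)
    (hgt : ∀ x ∉ B, V x > γ)
    (hdec : ∀ x ∉ B, ∀ i : Fin N, fderiv ℝ V x (f i x) ≤ -ρ) :
    ∀ x : ℝ → EuclideanSpace ℝ (Fin n), IsSwitchedSolution f x →
      x 0 ∈ B → ∀ t : ℝ, 0 ≤ t → x t ∈ B :=
  positively_invariant_of_lyapunov_general f V hV B γ ρ hρ hbd hgt hdec
end

section
/- (Theorem 2) Let n, N, ℓ ≥ 1, δ > 0 and β ≥ 0. Suppose V ∈ ℝ[x_1,…,x_n] is SOS and satisfies V(x) ≥ δ · ‖x‖_{2ℓ}^{2ℓ} for all x ∈ ℝⁿ; for each i = 1, …, N let p_i ∈ ℝ[x_1,…,x_n] be SOS, and suppose that for each i the polynomial -(∇V · f_i) - p_i · (Σ_j x_j² - β) - δ · Σ_j x_j^{2ℓ} is SOS. Then there exists β̃ > 0 such that, with ρ := δ·β̃, for all x ∈ ℝⁿ with ‖x‖_{2ℓ}^{2ℓ} ≥ β̃ one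 has max_{i=1,…,N} (∇V · f_i)(x) ≤ -ρ. -/
open MvPolynomial

/-- A polynomial is a sum of squares (SOS) if it is a finite sum of squares of
polynomials. -/
def IsSOS {n : ℕ} (p : MvPolynomial (Fin n) ℝ) : Prop :=
  ∃ (k : ℕ) (g : Fin k → MvPolynomial (Fin n) ℝ), p = ∑ j, g j ^ 2

lemma IsSOS.eval_nonneg {n : ℕ} {p : MvPolynomial (Fin n) ℝ} (h : IsSOS p)
    (x : Fin n → ℝ) : 0 ≤ eval x p := by
  obtain ⟨k, g, rfl⟩ := h
  simp only [map_sum, map_pow]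
  exact Finset.sum_nonneg fun j _ => sq_nonneg _

/-- Theorem 2: if `V` is SOS with `V(x) ≥ δ ‖x‖_{2ℓ}^{2ℓ}`, the `p_i` are SOS, and
`-(∇V · f_i) - p_i (‖x‖₂² - β) - δ ‖x‖_{2ℓ}^{2ℓ}` is SOS for every `i`, then there is
`β̃ > 0` such that, with `ρ := δ β̃`, `max_i (∇V · f_i)(x) ≤ -ρ` whenever
`‖x‖_{2ℓ}^{2ℓ} ≥ β̃`. -/
theorem exists_uniform_decrease_of_sos {n N ℓ : ℕ} (hn : 1 ≤ n) (hN : 1 ≤ N) (hℓ : 1 ≤ ℓ)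
    (δ β : ℝ) (hδ : 0 < δ) (hβ : 0 ≤ β)
    (f : Fin N → Fin n → MvPolynomial (Fin n) ℝ)
    (V : MvPolynomial (Fin n) ℝ) (hVsos : IsSOS V)
    (hVlb : ∀ x : Fin n → ℝ, δ * ∑ j, x j ^ (2 * ℓ) ≤ eval x V)
    (p : Fin N → MvPolynomial (Fin n) ℝ) (hp : ∀ i, IsSOS (p i))
    (hsos : ∀ i, IsSOS
      (-(∑ j, pderiv j V * f i j)
        - p i * ((∑ j, X j ^ 2) - C β)
        - C δ * ∑ j, X j ^ (2 * ℓ))) :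
    ∃ βt : ℝ, 0 < βt ∧
      ∀ x : Fin n → ℝ, βt ≤ ∑ j, x j ^ (2 * ℓ) →
        ∀ i : Fin N, eval x (∑ j, pderiv j V * f i j) ≤ -(δ * βt) := by
  refine ⟨max 1 (β ^ ℓ), lt_of_lt_of_le one_pos (le_max_left _ _), ?_⟩
  intro x hx i
  set t : ℝ := ∑ j, x j ^ (2 * ℓ) with ht
  set s : ℝ := ∑ j, x j ^ 2 with hs
  have hs0 : 0 ≤ s := Finset.sum_nonneg fun j _ => sq_nonneg _
  -- t ≤ s ^ ℓ
  have hts : t ≤ s ^ ℓ := by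
    have h1 : ∀ j ∈ Finset.univ, x j ^ (2 * ℓ) ≤ x j ^ 2 * s ^ (ℓ - 1) := by
      intro j _
      have hj : x j ^ 2 ≤ s := Finset.single_le_sum (f := fun j => x j ^ 2)
        (fun j _ => sq_nonneg _) (Finset.mem_univ j)
      calc x j ^ (2 * ℓ) = x j ^ 2 * (x j ^ 2) ^ (ℓ - 1) := by
            rw [← pow_mul, ← pow_add]
            congr 1
            omega
        _ ≤ x j ^ 2 * s ^ (ℓ - 1) := by
            exact mul_le_mul_of_nonneg_left (pow_le_pow_left₀ (sq_nonneg _) hj _) (sq_nonneg _)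
    calc t ≤ ∑ j, x j ^ 2 * s ^ (ℓ - 1) := Finset.sum_le_sum h1
      _ = s * s ^ (ℓ - 1) := by rw [← Finset.sum_mul]
      _ = s ^ ℓ := by rw [← pow_succ']; congr 1; omega
  have hβt : β ^ ℓ ≤ max 1 (β ^ ℓ) := le_max_right _ _
  have hβs : β ≤ s := by
    have : β ^ ℓ ≤ s ^ ℓ := le_trans (le_trans hβt hx) hts
    exact le_of_pow_le_pow_left₀ (by omega) hs0 this
  have hpnn : 0 ≤ eval x (p i) := (hp i).eval_nonneg x
  have hkey := (hsos i).eval_nonneg x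
  simp only [map_sub, map_neg, map_mul, map_sum, eval_C, map_pow, eval_X] at hkey
  rw [← hs, ← ht] at hkey
  have hgoal : eval x (∑ j, pderiv j V * f i j)
      = ∑ j, eval x (pderiv j V) * eval x (f i j) := by
    simp [map_sum]
  rw [hgoal]
  have htβt : max 1 (β ^ ℓ) ≤ t := hx
  nlinarith [mul_nonneg hpnn (sub_nonneg.2 hβs), mul_le_mul_of_nonneg_left htβt hδ.le]
end
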